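/- The set S_{(s,0)} has Lebesgue measure zero. -/

import Mathlib

open Finset

/-- The term of the series: `c n / s ^ (c 1 + ... + c (n+1))` (0-indexed). -/
noncomputable def sTerm (s : ℕ) (c : ℕ → ℕ) (n : ℕ) : ℝ :=
  (c n : ℝ) / (s : ℝ) ^ (∑ k ∈ Finset.range (n + 1), c k)

/-- `x = Σ_{k=1}^∞ c_k / s^{c_1+⋯+c_k}`. -/
noncomputable def sVal (s : ℕ) (c : ℕ → ℕ) : ℝ := ∑' n : ℕ, sTerm s c n

/-- The sequence `(c_k)` has all terms in `{1, ..., s-1}`. -/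
def sValid (s : ℕ) (c : ℕ → ℕ) : Prop := ∀ k, 1 ≤ c k ∧ c k ≤ s - 1

/-- The set `S_{(s,0)}`. -/
def Sset (s : ℕ) : Set ℝ := { x | ∃ c : ℕ → ℕ, sValid s c ∧ x = sVal s c }

/-- The cylinder `Δ'_{c_1 ... c_n}` of rank `n` with base the first `n` terms of `c`. -/
def cyl (s n : ℕ) (c : ℕ → ℕ) : Set ℝ :=
  { x | ∃ c' : ℕ → ℕ, sValid s c' ∧ (∀ k < n, c' k = c k) ∧ x = sVal s c' }

/-- The cylinder `Δ'_{c_1 ... c_n p}`: prefix of length `n` from `c`, next digit `p`. -/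
def cylExt (s n : ℕ) (c : ℕ → ℕ) (p : ℕ) : Set ℝ :=
  { x | ∃ c' : ℕ → ℕ, sValid s c' ∧ (∀ k < n, c' k = c k) ∧ c' n = p ∧ x = sVal s c' }

/-- `g_n = Σ_{k=1}^n c_k / s^{c_1+⋯+c_k}`. -/
noncomputable def gPart (s n : ℕ) (c : ℕ → ℕ) : ℝ := ∑ k ∈ Finset.range n, sTerm s c k

/-!
Write `σ n = c 0 + ⋯ + c (n - 1)`. Since `c + 1 ≤ s ^ c`, the `k`-th term `c k / s ^ σ (k + 1)` is at
most `s⁻¹ ^ σ k - s⁻¹ ^ σ (k + 1)`, so the series telescopes and its tail after `n` terms is at most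
`s⁻¹ ^ σ n`. Hence `S_{(s,0)}` is covered by the intervals `[g_n, g_n + s⁻¹ ^ σ n]`, one for each
prefix `(c 0, …, c (n - 1))`, whose total length is `(∑_{m=1}^{s-1} s⁻¹ ^ m) ^ n ≤ ((s - 1) / s) ^ n`.
-/

open MeasureTheory Filter

lemma sTerm_nonneg (s : ℕ) (c : ℕ → ℕ) (k : ℕ) : 0 ≤ sTerm s c k := by
  unfold sTerm; positivity

lemma sTerm_le_sub {s : ℕ} (hs : 1 < s) (c : ℕ → ℕ) (k : ℕ) :
    sTerm s c k ≤ (s : ℝ)⁻¹ ^ (∑ j ∈ range k, c j) - (s : ℝ)⁻¹ ^ (∑ j ∈ range (k + 1), c j) := by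
  have hpow : (c k : ℝ) + 1 ≤ (s : ℝ) ^ c k := by exact_mod_cast Nat.lt_pow_self hs
  rw [sTerm, sum_range_succ, inv_pow, inv_pow, pow_add,
    show ((s : ℝ) ^ (∑ j ∈ range k, c j))⁻¹ - ((s : ℝ) ^ (∑ j ∈ range k, c j) * (s : ℝ) ^ c k)⁻¹
      = ((s : ℝ) ^ c k - 1) / ((s : ℝ) ^ (∑ j ∈ range k, c j) * (s : ℝ) ^ c k) by field_simp]
  exact div_le_div_of_nonneg_right (by linarith) (by positivity)

lemma sum_range_sTerm_add_le {s : ℕ} (hs : 1 < s) (c : ℕ → ℕ) (n N : ℕ) :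
    ∑ k ∈ range N, sTerm s c (k + n) ≤ (s : ℝ)⁻¹ ^ (∑ j ∈ range n, c j) := by
  set f : ℕ → ℝ := fun k => (s : ℝ)⁻¹ ^ (∑ j ∈ range (k + n), c j)
  calc ∑ k ∈ range N, sTerm s c (k + n) ≤ ∑ k ∈ range N, (f k - f (k + 1)) := by
        gcongr with k
        simpa [f, add_right_comm k 1 n] using sTerm_le_sub hs c (k + n)
    _ = f 0 - f N := sum_range_sub' f N
    _ ≤ f 0 := sub_le_self _ (by positivity)
    _ = _ := by simp [f]

lemma summable_sTerm {s : ℕ} (hs : 1 < s) (c : ℕ → ℕ) : Summable (sTerm s c) :=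
  summable_of_sum_range_le (sTerm_nonneg s c) fun N => by
    simpa using sum_range_sTerm_add_le hs c 0 N

lemma sVal_mem_Icc_gPart {s : ℕ} (hs : 1 < s) (c : ℕ → ℕ) (n : ℕ) :
    sVal s c ∈ Set.Icc (gPart s n c) (gPart s n c + (s : ℝ)⁻¹ ^ (∑ j ∈ range n, c j)) := by
  rw [sVal, gPart, ← (summable_sTerm hs c).sum_add_tsum_nat_add n]
  have htail : ∑' k, sTerm s c (k + n) ≤ (s : ℝ)⁻¹ ^ (∑ j ∈ range n, c j) :=
    Real.tsum_le_of_sum_range_le (fun k => sTerm_nonneg s c _) (sum_range_sTerm_add_le hs c n)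
  exact ⟨le_add_of_nonneg_right (tsum_nonneg fun k => sTerm_nonneg s c _), by gcongr⟩

lemma gPart_congr (s n : ℕ) {c c' : ℕ → ℕ} (h : ∀ k < n, c k = c' k) :
    gPart s n c = gPart s n c' := by
  refine sum_congr rfl fun k hk => ?_
  have hk : k < n := mem_range.mp hk
  rw [sTerm, sTerm, h k hk, sum_congr rfl fun j hj => h j (by rw [mem_range] at hj; omega)]

lemma Sset_subset_biUnion_Icc {s : ℕ} (hs : 1 < s) (n : ℕ) :
    Sset s ⊆ ⋃ p ∈ Fintype.piFinset (fun _ : Fin n => Icc 1 (s - 1)),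
      Set.Icc (gPart s n (Function.extend Fin.val p 0))
        (gPart s n (Function.extend Fin.val p 0) + (s : ℝ)⁻¹ ^ (∑ i, p i)) := by
  rintro _ ⟨c, hc, rfl⟩
  let p : Fin n → ℕ := fun i => c i
  have hp : p ∈ Fintype.piFinset (fun _ : Fin n => Icc 1 (s - 1)) :=
    Fintype.mem_piFinset.mpr fun i => mem_Icc.mpr (hc i)
  have hg : gPart s n (Function.extend Fin.val p 0) = gPart s n c :=
    gPart_congr s n fun k hk => Fin.val_injective.extend_apply p 0 ⟨k, hk⟩
  refine Set.mem_biUnion hp ?_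
  rw [hg, Fin.sum_univ_eq_sum_range c n]
  exact sVal_mem_Icc_gPart hs c n

lemma sum_piFinset_pow_sum {R : Type*} [CommSemiring R] (t : Finset ℕ) (x : R) (n : ℕ) :
    ∑ p ∈ Fintype.piFinset (fun _ : Fin n => t), x ^ (∑ i, p i) = (∑ m ∈ t, x ^ m) ^ n := by
  rw [← Fin.prod_const, prod_univ_sum]
  simp only [prod_pow_eq_pow_sum]

lemma sum_Icc_inv_pow_lt_one {s : ℕ} (hs : 1 < s) : ∑ m ∈ Icc 1 (s - 1), (s : ℝ)⁻¹ ^ m < 1 := by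
  have hs0 : (0 : ℝ) < s := by positivity
  calc ∑ m ∈ Icc 1 (s - 1), (s : ℝ)⁻¹ ^ m ≤ #(Icc 1 (s - 1)) • (s : ℝ)⁻¹ :=
        sum_le_card_nsmul _ _ _ fun m hm =>
          pow_le_of_le_one (by positivity) (inv_le_one_of_one_le₀ (by exact_mod_cast hs.le))
            (by rw [mem_Icc] at hm; omega)
    _ = ((s : ℝ) - 1) / s := by
        rw [Nat.card_Icc, nsmul_eq_mul, div_eq_mul_inv]
        push_cast [show 1 ≤ s by omega, show s - 1 + 1 - 1 = s - 1 by omega]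
        ring
    _ < 1 := by rw [div_lt_one hs0]; linarith

lemma volume_Sset_le {s : ℕ} (hs : 1 < s) (n : ℕ) :
    volume (Sset s) ≤ ENNReal.ofReal ((∑ m ∈ Icc 1 (s - 1), (s : ℝ)⁻¹ ^ m) ^ n) := by
  calc volume (Sset s)
      ≤ ∑ p ∈ Fintype.piFinset (fun _ : Fin n => Icc 1 (s - 1)),
          volume (Set.Icc (gPart s n (Function.extend Fin.val p 0))
            (gPart s n (Function.extend Fin.val p 0) + (s : ℝ)⁻¹ ^ (∑ i, p i))) :=
        (measure_mono (Sset_subset_biUnion_Icc hs n)).trans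
          (measure_biUnion_finset_le _ _)
    _ = ENNReal.ofReal (∑ p ∈ Fintype.piFinset (fun _ : Fin n => Icc 1 (s - 1)),
          (s : ℝ)⁻¹ ^ (∑ i, p i)) := by
        rw [ENNReal.ofReal_sum_of_nonneg fun _ _ => by positivity]
        simp only [Real.volume_Icc, add_sub_cancel_left]
    _ = _ := by rw [sum_piFinset_pow_sum]

theorem stmt11 (s : ℕ) (hs : 2 < s) : MeasureTheory.volume (Sset s) = 0 := by
  have hs1 : 1 < s := by omega
  have hρ := tendsto_pow_atTop_nhds_zero_of_lt_one (by positivity) (sum_Icc_inv_pow_lt_one hs1)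
  have hvol := ENNReal.tendsto_ofReal hρ
  rw [ENNReal.ofReal_zero] at hvol
  exact le_antisymm (ge_of_tendsto' hvol (volume_Sset_le hs1)) zero_le
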